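/- For every non-circular simple causal formula φ (a Boolean combination of atoms X = x and non-nested causal statements whose cause and effect share no variables), M^∧lamp ⊨ φ iff M^¬⊕lamp ⊨ φ. -/
import Mathlib


/-- A causal model: structural equations `F` for endogenous variables `V`,
given a context (setting of exogenous variables) `u : U`.  Acyclicity is
enforced by an ordering `ord`: each equation may only depend on
strictly smaller variables. -/
structure CausalModel (U V Val : Type) where
  F : V → U → (V → Val) → Val
  ord : V → ℕ
  resp : ∀ v u a b, (∀ w, ord w < ord v → a w = b w) → F v u a = F v u b

namespace CausalModel

variable {U V Val : Type}

/-- `s` is a compatible (consistent) assignment to the endogenous variables. -/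
def Solves (M : CausalModel U V Val) (u : U) (s : V → Val) : Prop :=
  ∀ v, s v = M.F v u s

/-- Intervention: replace the equations of variables on which `g` is defined
by the corresponding constants. -/
def intervene (M : CausalModel U V Val) (g : V → Option Val) : CausalModel U V Val where
  F v u a := (g v).getD (M.F v u a)
  ord := M.ord
  resp := by
    intro v u a b h
    cases hg : g v <;> simp [Option.getD, hg, M.resp v u a b h]

end CausalModel

/-- Formulas: atoms `X = x`, negation, conjunction, and causal statements
`X⃗ = x⃗ ⇝ φ` (per the modified HP definition). -/
inductive Form (V Val : Type) where
  | atom : V → Val → Form V Val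
  | neg : Form V Val → Form V Val
  | conj : Form V Val → Form V Val → Form V Val
  | cause : List (V × Val) → Form V Val → Form V Val

namespace Form

variable {U V Val : Type}

def disj (φ ψ : Form V Val) : Form V Val := .neg (.conj (.neg φ) (.neg ψ))

variable [DecidableEq V]

mutual
/-- Satisfaction `(M,u) ⊨ φ`.  Since the model is acyclic, there is a
unique compatible assignment, over which we (harmlessly) quantify. -/
def holds (M : CausalModel U V Val) (u : U) : Form V Val → Prop
  | .atom X x => ∀ s, M.Solves u s → s X = x
  | .neg φ => ¬ holds M u φ
  | .conj φ ψ => holds M u φ ∧ holds M u ψ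
  | .cause XS φ =>
      -- AC1
      (holds M u φ ∧ ∀ s, M.Solves u s → ∀ p ∈ XS, s p.1 = p.2) ∧
      -- AC2
      AC2 M u XS φ ∧
      -- AC3 (minimality)
      (∀ XS', List.Sublist XS' XS → XS' ≠ XS → ¬ AC2 M u XS' φ)
termination_by φ => (sizeOf φ, 0)

/-- AC2: there are alternative values `x'` for the variables of `XS` and a
witness set `W` held at its actual values making `φ` false. -/
def AC2 (M : CausalModel U V Val) (u : U) (XS : List (V × Val)) (φ : Form V Val) : Prop :=
  ∃ (x' : V → Val) (W : Finset V), ∀ s, M.Solves u s →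
    ¬ holds (M.intervene (fun v =>
        if v ∈ XS.map Prod.fst then some (x' v)
        else if v ∈ W then some (s v) else none)) u φ
termination_by (sizeOf φ, 1)
end

/-- Variables occurring in a formula. -/
def vars : Form V Val → Finset V
  | .atom X _ => {X}
  | .neg φ => vars φ
  | .conj φ ψ => vars φ ∪ vars ψ
  | .cause XS φ => (XS.map Prod.fst).toFinset ∪ vars φ

/-- Simple formulas: Boolean combinations of atoms. -/
def Simple : Form V Val → Prop
  | .atom _ _ => True
  | .neg φ => Simple φ
  | .conj φ ψ => Simple φ ∧ Simple ψ
  | .cause _ _ => False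

end Form

/-- `M^∧lamp`: variables Switch1 = 0, Switch2 = 1, Lamp = 2; single context;
both switches are on (`true`); the lamp is on iff both switches are on. -/
def Mand : CausalModel Unit (Fin 3) Bool where
  F v _ a :=
    match v with
    | 0 => true
    | 1 => true
    | 2 => a 0 && a 1
  ord v := v.val
  resp := by
    intro v u a b h
    fin_cases v
    · rfl
    · rfl
    · show (a 0 && a 1) = (b 0 && b 1)
      rw [h 0 (by norm_num), h 1 (by norm_num)]

/-- `M^¬⊕lamp`: as `Mand`, but the lamp is on iff the switches agree. -/
def Mxor : CausalModel Unit (Fin 3) Bool where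
  F v _ a :=
    match v with
    | 0 => true
    | 1 => true
    | 2 => a 0 == a 1
  ord v := v.val
  resp := by
    intro v u a b h
    fin_cases v
    · rfl
    · rfl
    · show (a 0 == a 1) = (b 0 == b 1)
      rw [h 0 (by norm_num), h 1 (by norm_num)]

/-- Non-circular simple causal formulas (the non-circular fragment of LC₁):
Boolean combinations of atoms and causal statements `X⃗ = x⃗ ⇝ φ` with `φ`
simple and sharing no variables with `X⃗`. -/
def LC1nc {V Val : Type} [DecidableEq V] : Form V Val → Prop
  | .atom _ _ => True
  | .neg φ => LC1nc φ
  | .conj φ ψ => LC1nc φ ∧ LC1nc ψ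
  | .cause XS φ => Form.Simple φ ∧ ∀ p ∈ XS, p.1 ∉ Form.vars φ

section Aux
open Form

variable {U V Val : Type} [DecidableEq V]

/-- Evaluation of simple formulas at an assignment. -/
def evalS (s : V → Val) : Form V Val → Prop
  | .atom X x => s X = x
  | .neg φ => ¬ evalS s φ
  | .conj φ ψ => evalS s φ ∧ evalS s ψ
  | .cause _ _ => True

lemma evalS_congr {s t : V → Val} : ∀ {φ : Form V Val}, Form.Simple φ →
    (∀ v ∈ Form.vars φ, s v = t v) → (evalS s φ ↔ evalS t φ)
  | .atom X x, _, h => by simp [evalS, h X (by simp [Form.vars])]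
  | .neg φ, hs, h => by
      simp [evalS, evalS_congr (s := s) (t := t) (φ := φ) hs (by simpa [Form.vars] using h)]
  | .conj φ ψ, hs, h => by
      simp [evalS,
        evalS_congr (s := s) (t := t) (φ := φ) hs.1
          (fun v hv => h v (by simp [Form.vars, hv])),
        evalS_congr (s := s) (t := t) (φ := ψ) hs.2
          (fun v hv => h v (by simp [Form.vars, hv]))]
  | .cause _ _, hs, _ => hs.elim

lemma holds_iff_evalS {M : CausalModel U V Val} {u : U} {s₀ : V → Val}
    (hsol : M.Solves u s₀) (huniq : ∀ s, M.Solves u s → ∀ v, s v = s₀ v) :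
    ∀ {φ : Form V Val}, Form.Simple φ → (Form.holds M u φ ↔ evalS s₀ φ)
  | .atom X x, _ => by
      rw [Form.holds]
      constructor
      · intro h; exact h s₀ hsol
      · intro h s hs; rw [huniq s hs X]; exact h
  | .neg φ, hs => by
      rw [Form.holds]
      simp [evalS, holds_iff_evalS hsol huniq (φ := φ) hs]
  | .conj φ ψ, hs => by
      rw [Form.holds]
      simp [evalS, holds_iff_evalS hsol huniq (φ := φ) hs.1,
        holds_iff_evalS hsol huniq (φ := ψ) hs.2]
  | .cause _ _, hs => hs.elim

end Aux

section Lamp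

/-- The unique solution of either lamp model (with lamp equation `f`)
after an intervention `g`. -/
def sol3 (f : Bool → Bool → Bool) (g : Fin 3 → Option Bool) (v : Fin 3) : Bool :=
  if v = 0 then (g 0).getD true
  else if v = 1 then (g 1).getD true
  else (g 2).getD (f ((g 0).getD true) ((g 1).getD true))

lemma sol3_spec {M : CausalModel Unit (Fin 3) Bool} {f : Bool → Bool → Bool}
    (h0 : ∀ a, M.F 0 () a = true) (h1 : ∀ a, M.F 1 () a = true)
    (h2 : ∀ a, M.F 2 () a = f (a 0) (a 1)) (g : Fin 3 → Option Bool) :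
    (M.intervene g).Solves () (sol3 f g) ∧
      ∀ s, (M.intervene g).Solves () s → ∀ v, s v = sol3 f g v := by
  constructor
  · intro v
    fin_cases v
    · simp [CausalModel.intervene, sol3, h0]
    · simp [CausalModel.intervene, sol3, h1]
    · simp [CausalModel.intervene, sol3, h0, h1, h2]
  · intro s hs
    have e0 : s 0 = (g 0).getD true := by
      have := hs 0; rwa [show (M.intervene g).F 0 () s = (g 0).getD true by
        simp [CausalModel.intervene, h0]] at this
    have e1 : s 1 = (g 1).getD true := by
      have := hs 1; rwa [show (M.intervene g).F 1 () s = (g 1).getD true by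
        simp [CausalModel.intervene, h1]] at this
    have e2 : s 2 = (g 2).getD (f ((g 0).getD true) ((g 1).getD true)) := by
      have := hs 2
      rw [show (M.intervene g).F 2 () s = (g 2).getD (f (s 0) (s 1)) by
        simp [CausalModel.intervene, h2]] at this
      rw [this, e0, e1]
    intro v
    fin_cases v
    · simpa [sol3] using e0
    · simpa [sol3] using e1
    · simpa [sol3] using e2

lemma Mand_F0 : ∀ a, Mand.F 0 () a = true := fun _ => rfl
lemma Mand_F1 : ∀ a, Mand.F 1 () a = true := fun _ => rfl
lemma Mand_F2 : ∀ a, Mand.F 2 () a = ((a 0) && (a 1)) := fun _ => rfl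
lemma Mxor_F0 : ∀ a, Mxor.F 0 () a = true := fun _ => rfl
lemma Mxor_F1 : ∀ a, Mxor.F 1 () a = true := fun _ => rfl
lemma Mxor_F2 : ∀ a, Mxor.F 2 () a = ((a 0) == (a 1)) := fun _ => rfl

lemma solves_intervene_none (M : CausalModel Unit (Fin 3) Bool) (s : Fin 3 → Bool) :
    (M.intervene (fun _ => none)).Solves () s ↔ M.Solves () s := by
  simp [CausalModel.Solves, CausalModel.intervene]

lemma base_spec {M : CausalModel Unit (Fin 3) Bool} {f : Bool → Bool → Bool}
    (h0 : ∀ a, M.F 0 () a = true) (h1 : ∀ a, M.F 1 () a = true)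
    (h2 : ∀ a, M.F 2 () a = f (a 0) (a 1)) (hf : f true true = true) :
    M.Solves () (fun _ => true) ∧ ∀ s, M.Solves () s → ∀ v, s v = true := by
  obtain ⟨hs, hu⟩ := sol3_spec h0 h1 h2 (fun _ => none)
  have hsol : sol3 f (fun _ => none) = fun _ => true := by
    funext v; fin_cases v <;> simp [sol3, hf]
  rw [hsol] at hs hu
  exact ⟨(solves_intervene_none M _).mp hs,
    fun s h => hu s ((solves_intervene_none M s).mpr h)⟩

end Lamp

section Core

/-- The intervention used in AC2 when the actual solution is constantly `true`. -/
def gW (XS : List (Fin 3 × Bool)) (x' : Fin 3 → Bool) (W : Finset (Fin 3)) (v : Fin 3) :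
    Option Bool :=
  if v ∈ XS.map Prod.fst then some (x' v) else if v ∈ W then some true else none

lemma transfer {XS : List (Fin 3 × Bool)} {φ : Form (Fin 3) Bool}
    (hs : Form.Simple φ) (hd : ∀ p ∈ XS, p.1 ∉ Form.vars φ)
    {f f' : Bool → Bool → Bool}
    (hfr : ∀ a, f a true = a) (hfl : ∀ b, f true b = b)
    (hfr' : ∀ a, f' a true = a) (hfl' : ∀ b, f' true b = b)
    (hsurj : ∀ t, ∃ a b, f' a b = t) :
    (∃ (x' : Fin 3 → Bool) (W : Finset (Fin 3)), ¬ evalS (sol3 f (gW XS x' W)) φ) →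
    (∃ (x' : Fin 3 → Bool) (W : Finset (Fin 3)), ¬ evalS (sol3 f' (gW XS x' W)) φ) := by
  rintro ⟨x', W, h⟩
  by_cases h2 : (2 : Fin 3) ∈ XS.map Prod.fst
  · refine ⟨x', W, ?_⟩
    have e2 : gW XS x' W 2 = some (x' 2) := by simp only [gW, if_pos h2]
    have : sol3 f' (gW XS x' W) = sol3 f (gW XS x' W) := by
      funext v; fin_cases v
      · rfl
      · rfl
      · show (gW XS x' W 2).getD _ = (gW XS x' W 2).getD _
        rw [e2]; rfl
    rwa [this]
  · by_cases h0 : (0 : Fin 3) ∈ XS.map Prod.fst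
    · by_cases h1 : (1 : Fin 3) ∈ XS.map Prod.fst
      · -- both switches intervened; φ mentions only the lamp
        have hv0 : (0 : Fin 3) ∉ Form.vars φ := by
          obtain ⟨p, hp, hp0⟩ := List.mem_map.mp h0
          exact hp0 ▸ hd p hp
        have hv1 : (1 : Fin 3) ∉ Form.vars φ := by
          obtain ⟨p, hp, hp0⟩ := List.mem_map.mp h1
          exact hp0 ▸ hd p hp
        set t := sol3 f (gW XS x' W) 2 with ht
        obtain ⟨a, b, hab⟩ := hsurj t
        set x'' : Fin 3 → Bool := fun v => if v = 0 then a else if v = 1 then b else x' v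
          with hx''
        refine ⟨x'', ∅, ?_⟩
        have e0' : gW XS x'' ∅ 0 = some a := by
          simp only [gW, if_pos h0, hx'']; norm_num
        have e1' : gW XS x'' ∅ 1 = some b := by
          simp only [gW, if_pos h1, hx'']; norm_num
        have e2' : gW XS x'' ∅ 2 = none := by
          simp only [gW, if_neg h2]; simp
        have key : ∀ v ∈ Form.vars φ, sol3 f' (gW XS x'' ∅) v = sol3 f (gW XS x' W) v := by
          intro v hv
          have hv2 : v = 2 := by
            fin_cases v
            · exact absurd hv hv0
            · exact absurd hv hv1
            · rfl
          subst hv2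
          show (gW XS x'' ∅ 2).getD
              (f' ((gW XS x'' ∅ 0).getD true) ((gW XS x'' ∅ 1).getD true)) = t
          rw [e0', e1', e2']
          simpa using hab
        intro hcon
        exact h ((evalS_congr hs key).mp hcon)
      · -- switch 1 keeps its equation, hence stays `true`
        refine ⟨x', W, ?_⟩
        have e1 : (gW XS x' W 1).getD true = true := by
          simp only [gW, if_neg h1]
          rcases em ((1 : Fin 3) ∈ W) with hw | hw <;> simp [hw]
        have : sol3 f' (gW XS x' W) = sol3 f (gW XS x' W) := by
          funext v; fin_cases v
          · rfl
          · rfl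
          · show (gW XS x' W 2).getD
                (f' ((gW XS x' W 0).getD true) ((gW XS x' W 1).getD true)) =
              (gW XS x' W 2).getD
                (f ((gW XS x' W 0).getD true) ((gW XS x' W 1).getD true))
            rw [e1, hfr, hfr']
        rwa [this]
    · -- switch 0 keeps its equation, hence stays `true`
      refine ⟨x', W, ?_⟩
      have e0 : (gW XS x' W 0).getD true = true := by
        simp only [gW, if_neg h0]
        rcases em ((0 : Fin 3) ∈ W) with hw | hw <;> simp [hw]
      have : sol3 f' (gW XS x' W) = sol3 f (gW XS x' W) := by
        funext v; fin_cases v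
        · rfl
        · rfl
        · show (gW XS x' W 2).getD
              (f' ((gW XS x' W 0).getD true) ((gW XS x' W 1).getD true)) =
            (gW XS x' W 2).getD
              (f ((gW XS x' W 0).getD true) ((gW XS x' W 1).getD true))
          rw [e0, hfl, hfl']
      rwa [this]

lemma AC2_reduce {M : CausalModel Unit (Fin 3) Bool} {f : Bool → Bool → Bool}
    (h0 : ∀ a, M.F 0 () a = true) (h1 : ∀ a, M.F 1 () a = true)
    (h2 : ∀ a, M.F 2 () a = f (a 0) (a 1)) (hf : f true true = true)
    {XS : List (Fin 3 × Bool)} {φ : Form (Fin 3) Bool} (hs : Form.Simple φ) :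
    Form.AC2 M () XS φ ↔
      ∃ (x' : Fin 3 → Bool) (W : Finset (Fin 3)), ¬ evalS (sol3 f (gW XS x' W)) φ := by
  obtain ⟨hbs, hbu⟩ := base_spec h0 h1 h2 hf
  rw [Form.AC2]
  apply exists_congr; intro x'
  apply exists_congr; intro W
  constructor
  · intro h
    have := h (fun _ => true) hbs
    rw [show (fun v => if v ∈ XS.map Prod.fst then some (x' v)
          else if v ∈ W then some ((fun _ => true) v) else none) = gW XS x' W from rfl] at this
    obtain ⟨hs', hu'⟩ := sol3_spec h0 h1 h2 (gW XS x' W)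
    exact fun hc => this ((holds_iff_evalS hs' hu' hs).mpr hc)
  · intro h s hsol
    have hg : (fun v => if v ∈ XS.map Prod.fst then some (x' v)
          else if v ∈ W then some (s v) else none) = gW XS x' W := by
      funext v; simp [gW, hbu s hsol v]
    rw [hg]
    obtain ⟨hs', hu'⟩ := sol3_spec h0 h1 h2 (gW XS x' W)
    exact fun hc => h ((holds_iff_evalS hs' hu' hs).mp hc)

lemma AC2_iff {XS : List (Fin 3 × Bool)} {φ : Form (Fin 3) Bool}
    (hs : Form.Simple φ) (hd : ∀ p ∈ XS, p.1 ∉ Form.vars φ) :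
    Form.AC2 Mand () XS φ ↔ Form.AC2 Mxor () XS φ := by
  rw [AC2_reduce Mand_F0 Mand_F1 Mand_F2 rfl hs,
      AC2_reduce Mxor_F0 Mxor_F1 Mxor_F2 rfl hs]
  constructor
  · exact transfer hs hd (by simp) (by simp) (by simp) (by simp)
      (fun t => ⟨t, true, by simp⟩)
  · exact transfer hs hd (by simp) (by simp) (by simp) (by simp)
      (fun t => ⟨t, true, by simp⟩)

end Core

/-- `M^∧lamp` and `M^¬⊕lamp` satisfy exactly the same
non-circular simple causal formulas. -/
theorem stmt5 (φ : Form (Fin 3) Bool) (h : LC1nc φ) :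
    Form.holds Mand () φ ↔ Form.holds Mxor () φ := by
  obtain ⟨ha, hua⟩ := base_spec Mand_F0 Mand_F1 Mand_F2 rfl
  obtain ⟨hx, hux⟩ := base_spec Mxor_F0 Mxor_F1 Mxor_F2 rfl
  induction φ with
  | atom X x =>
    rw [holds_iff_evalS ha hua (φ := .atom X x) trivial,
        holds_iff_evalS hx hux (φ := .atom X x) trivial]
  | neg φ ih =>
    rw [Form.holds, Form.holds, ih h]
  | conj φ ψ ihφ ihψ =>
    rw [Form.holds, Form.holds, ihφ h.1, ihψ h.2]
  | cause XS φ _ =>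
    obtain ⟨hsimp, hd⟩ := h
    rw [Form.holds, Form.holds]
    have hφ : Form.holds Mand () φ ↔ Form.holds Mxor () φ := by
      rw [holds_iff_evalS ha hua hsimp, holds_iff_evalS hx hux hsimp]
    have hAC1b : (∀ s, Mand.Solves () s → ∀ p ∈ XS, s p.1 = p.2) ↔
        (∀ s, Mxor.Solves () s → ∀ p ∈ XS, s p.1 = p.2) := by
      constructor
      · intro hh s hs p hp
        rw [hux s hs p.1]
        have := hh (fun _ => true) ha p hp
        exact this
      · intro hh s hs p hp
        rw [hua s hs p.1]
        have := hh (fun _ => true) hx p hp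
        exact this
    refine and_congr (and_congr hφ hAC1b) (and_congr (AC2_iff hsimp hd) ?_)
    constructor
    · intro h3 XS' hsub hne hA
      exact h3 XS' hsub hne
        ((AC2_iff hsimp (fun p hp => hd p (hsub.subset hp))).mpr hA)
    · intro h3 XS' hsub hne hA
      exact h3 XS' hsub hne
        ((AC2_iff hsimp (fun p hp => hd p (hsub.subset hp))).mp hA)
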